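/- arXiv:2507.13500 — 3 statements merged into one kernel-verified Lean document; each statement's English description precedes it below -/
import Mathlib

section
/- Fix integers n ≥ 1, f ≥ 1, and a prime p with p > n. Suppose for 0 ≤ i ≤ f−1 and 1 ≤ j ≤ n we have integers λ_{i,j} with |λ_{i,j}| ≤ n − 1, such that for each i the sum Σ_j λ_{i,j} = 0, and set λ* := Σ_{i,j} λ_{i,j} p^{i+(j−1)f}. If q := p^f and (q^n − 1) divides λ*, then all λ_{i,j} = 0. -/
/-!
Write `λ*` in base `p` with the signed digits `λ_{i,j}`, the digit of `p ^ (i + j f)`. Since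
`|λ_{i,j}| ≤ n - 1 ≤ p - 2`, we get `|λ*| ≤ (p - 2)(p^{nf} - 1)/(p - 1) < p^{nf} - 1`, so the
divisibility forces `λ* = 0`; and a vanishing base-`p` expansion with digits of absolute value
`< p` has all digits zero.
-/

theorem eq_zero_of_sum_mul_pow_eq_zero {b : ℤ} :
    ∀ {m : ℕ} (d : Fin m → ℤ), (∀ k, |d k| < b) → ∑ k, d k * b ^ (k : ℕ) = 0 → ∀ k, d k = 0
  | 0, _, _, _, k => k.elim0
  | m + 1, d, hd, hsum, k => by
    rw [Fin.sum_univ_succ] at hsum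
    have hrest : ∑ k : Fin m, d k.succ * b ^ ((k : ℕ) + 1)
        = b * ∑ k : Fin m, d k.succ * b ^ (k : ℕ) := by
      rw [Finset.mul_sum]
      exact Finset.sum_congr rfl fun k _ => by ring
    simp only [Fin.val_zero, pow_zero, mul_one, Fin.val_succ, hrest] at hsum
    have hd0 : d 0 = 0 :=
      Int.eq_zero_of_abs_lt_dvd ⟨-∑ k : Fin m, d k.succ * b ^ (k : ℕ), by linarith⟩ (hd 0)
    have hb : b ≠ 0 := ((abs_nonneg _).trans_lt (hd 0)).ne'
    have htail := eq_zero_of_sum_mul_pow_eq_zero (fun k => d k.succ) (fun k => hd k.succ)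
      ((mul_eq_zero.mp (by linarith)).resolve_left hb)
    exact Fin.cases hd0 htail k

theorem abs_sum_mul_pow_lt_pow_sub_one {b : ℤ} {m : ℕ} (hm : m ≠ 0) (d : Fin m → ℤ)
    (hd : ∀ k, |d k| ≤ b - 2) : |∑ k, d k * b ^ (k : ℕ)| < b ^ m - 1 := by
  have hb : 2 ≤ b := by linarith [(abs_nonneg _).trans (hd ⟨0, Nat.pos_of_ne_zero hm⟩)]
  have hgeom : 0 < ∑ k : Fin m, b ^ (k : ℕ) :=
    Finset.sum_pos (fun k _ => by positivity) ⟨⟨0, Nat.pos_of_ne_zero hm⟩, Finset.mem_univ _⟩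
  calc |∑ k, d k * b ^ (k : ℕ)|
      ≤ ∑ k, |d k| * b ^ (k : ℕ) := by
        refine (Finset.abs_sum_le_sum_abs _ _).trans_eq (Finset.sum_congr rfl fun k _ => ?_)
        rw [abs_mul, abs_of_pos (by positivity : 0 < b ^ (k : ℕ))]
    _ ≤ ∑ k : Fin m, (b - 2) * b ^ (k : ℕ) :=
        Finset.sum_le_sum fun k _ => mul_le_mul_of_nonneg_right (hd k) (by positivity)
    _ < (b - 1) * ∑ k : Fin m, b ^ (k : ℕ) := by
        rw [← Finset.mul_sum]; exact mul_lt_mul_of_pos_right (by linarith) hgeom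
    _ = b ^ m - 1 := by rw [Fin.sum_univ_eq_sum_range (b ^ ·), mul_geom_sum]

theorem eq_zero_of_pow_sub_one_dvd_sum_mul_pow {b : ℤ} {m : ℕ} (d : Fin m → ℤ)
    (hd : ∀ k, |d k| ≤ b - 2) (hdvd : b ^ m - 1 ∣ ∑ k, d k * b ^ (k : ℕ)) : ∀ k, d k = 0 := by
  intro k
  have hm : m ≠ 0 := Nat.pos_iff_ne_zero.mp k.pos
  refine eq_zero_of_sum_mul_pow_eq_zero d (fun k => (hd k).trans_lt (by linarith)) ?_ k
  exact Int.eq_zero_of_abs_lt_dvd hdvd (abs_sum_mul_pow_lt_pow_sub_one hm d hd)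

theorem eq_zero_of_qn_sub_one_dvd_general
    (n f p : ℕ) (hpn : n < p)
    (lam : Fin f → Fin n → ℤ)
    (hbound : ∀ i j, |lam i j| ≤ (n : ℤ) - 1)
    (hdvd : ((p : ℤ) ^ (n * f) - 1) ∣
      ∑ i : Fin f, ∑ j : Fin n, lam i j * (p : ℤ) ^ ((i : ℕ) + (j : ℕ) * f)) :
    ∀ i j, lam i j = 0 := by
  intro i j
  -- `finProdFinEquiv (j, i) = i + f * j` is the position of the digit `λ_{i,j}`
  set d : Fin (n * f) → ℤ := fun k => lam (finProdFinEquiv.symm k).2 (finProdFinEquiv.symm k).1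
  have hsum : ∑ i : Fin f, ∑ j : Fin n, lam i j * (p : ℤ) ^ ((i : ℕ) + (j : ℕ) * f)
      = ∑ k, d k * (p : ℤ) ^ (k : ℕ) := by
    rw [Finset.sum_comm, ← Fintype.sum_prod_type', ← finProdFinEquiv.sum_comp]
    simp only [d, Equiv.symm_apply_apply, finProdFinEquiv_apply_val, mul_comm]
  have hd : ∀ k, |d k| ≤ (p : ℤ) - 2 := fun k => (hbound _ _).trans (by omega)
  simpa only [d, Equiv.symm_apply_apply] using eq_zero_of_pow_sub_one_dvd_sum_mul_pow d hd (hsum ▸ hdvd) (finProdFinEquiv (j, i))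

/-- Integers `λ_{i,j}` with `|λ_{i,j}| ≤ n - 1 < p - 1`, each row summing to
zero, arranged into `λ* = Σ_{i,j} λ_{i,j} p^{i + j·f}` (with `0 ≤ i < f`, `0 ≤ j < n`,
matching the paper's `1 ≤ j ≤ n` via `j ↦ j - 1`).  If `q^n - 1 = p^{nf} - 1` divides
`λ*`, then all `λ_{i,j}` vanish. -/
theorem eq_zero_of_qn_sub_one_dvd
    (n f p : ℕ) (hn : 1 ≤ n) (hf : 1 ≤ f) (hp : p.Prime) (hpn : n < p)
    (lam : Fin f → Fin n → ℤ)
    (hbound : ∀ i j, |lam i j| ≤ (n : ℤ) - 1)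
    (hrow : ∀ i, ∑ j, lam i j = 0)
    (hdvd : ((p : ℤ) ^ (n * f) - 1) ∣
      ∑ i : Fin f, ∑ j : Fin n, lam i j * (p : ℤ) ^ ((i : ℕ) + (j : ℕ) * f)) :
    ∀ i j, lam i j = 0 :=
  eq_zero_of_qn_sub_one_dvd_general n f p hpn lam hbound hdvd
end

section
/- Let k be a field and 𝔤 a Lie algebra over k with Lie subalgebra 𝔫. Let 𝔤[v] := 𝔤 ⊗_k k[v] with its natural k[v]-Lie algebra structure, and let 𝔤̃ be the preimage of 𝔫 under the evaluation map v ↦ 0 from 𝔤[v] to 𝔤. Then 𝔤̃ is a Lie subalgebra of 𝔤[v], and the map 𝔤̃ → 𝔫 ⋉ (𝔤/𝔫) sending vB + X (with B ∈ 𝔤[v], X ∈ 𝔫[v]) to (X(0), B(0) mod 𝔫) is a surjective Lie algebra homomorphism with kernel v·𝔤̃. -/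
open scoped TensorProduct

section Aux

variable {k : Type*} [Field k] {L : Type*} [LieRing L] [LieAlgebra k L]

/-- The coefficient maps, bundled. -/
noncomputable def ccAux (k : Type*) [Field k] (L : Type*) [LieRing L] [LieAlgebra k L]
    (i : ℕ) : Polynomial k ⊗[k] L →ₗ[k] L :=
  (TensorProduct.lid k L).toLinearMap ∘ₗ
    TensorProduct.map (Polynomial.lcoeff k i) LinearMap.id

lemma ccAux_tmul (i : ℕ) (p : Polynomial k) (x : L) :
    ccAux k L i (p ⊗ₜ x) = p.coeff i • x := by
  simp [ccAux]

lemma t_add_lie (a b w : Polynomial k ⊗[k] L) : ⁅a + b, w⁆ = ⁅a, w⁆ + ⁅b, w⁆ := add_lie a b w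

lemma t_lie_add (a b w : Polynomial k ⊗[k] L) : ⁅w, a + b⁆ = ⁅w, a⁆ + ⁅w, b⁆ := lie_add w a b

lemma t_zero_lie (w : Polynomial k ⊗[k] L) : ⁅(0 : Polynomial k ⊗[k] L), w⁆ = 0 := zero_lie w

lemma t_lie_zero (w : Polynomial k ⊗[k] L) : ⁅w, (0 : Polynomial k ⊗[k] L)⁆ = 0 := lie_zero w

lemma coeff_mul_one' (p q : Polynomial k) :
    (p * q).coeff 1 = p.coeff 0 * q.coeff 1 + p.coeff 1 * q.coeff 0 := by
  rw [Polynomial.coeff_mul, Finset.Nat.sum_antidiagonal_eq_sum_range_succ_mk]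
  simp [Finset.sum_range_succ, add_comm]

lemma ccAux_bracket0 (z w : Polynomial k ⊗[k] L) :
    ccAux k L 0 ⁅z, w⁆ = ⁅ccAux k L 0 z, ccAux k L 0 w⁆ := by
  induction z using TensorProduct.induction_on with
  | zero => rw [t_zero_lie]; simp
  | add a b ha hb => rw [t_add_lie, map_add, map_add, ha, hb, add_lie]
  | tmul p x =>
    induction w using TensorProduct.induction_on with
    | zero => rw [t_lie_zero]; simp
    | add a b ha hb => rw [t_lie_add, map_add, map_add, ha, hb, lie_add]
    | tmul q y =>
      rw [LieAlgebra.ExtendScalars.bracket_tmul, ccAux_tmul, ccAux_tmul, ccAux_tmul,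
        Polynomial.mul_coeff_zero, smul_lie, lie_smul, smul_smul]

lemma ccAux_bracket1 (z w : Polynomial k ⊗[k] L) :
    ccAux k L 1 ⁅z, w⁆ = ⁅ccAux k L 0 z, ccAux k L 1 w⁆ + ⁅ccAux k L 1 z, ccAux k L 0 w⁆ := by
  induction z using TensorProduct.induction_on with
  | zero => rw [t_zero_lie]; simp
  | add a b ha hb =>
    rw [t_add_lie, map_add, map_add, map_add, ha, hb, add_lie, add_lie]
    abel
  | tmul p x =>
    induction w using TensorProduct.induction_on with
    | zero => rw [t_lie_zero]; simp
    | add a b ha hb =>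
      rw [t_lie_add, map_add, map_add, map_add, ha, hb, lie_add, lie_add]
      abel
    | tmul q y =>
      rw [LieAlgebra.ExtendScalars.bracket_tmul]
      simp only [ccAux_tmul, coeff_mul_one', smul_lie, lie_smul, add_smul, smul_smul]
      rw [mul_comm (q.coeff 1) (p.coeff 0), mul_comm (q.coeff 0) (p.coeff 1)]

/-- Division by X on the tensor product. -/
noncomputable def divXAux (k : Type*) [Field k] (L : Type*) [LieRing L] [LieAlgebra k L] :
    Polynomial k ⊗[k] L →ₗ[k] Polynomial k ⊗[k] L :=
  TensorProduct.map
    { toFun := Polynomial.divX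
      map_add' := fun _ _ => Polynomial.divX_add
      map_smul' := by
        intro a p
        ext n
        simp [Polynomial.coeff_divX] }
    LinearMap.id

lemma ccAux_zero_divX (z : Polynomial k ⊗[k] L) :
    ccAux k L 0 (divXAux k L z) = ccAux k L 1 z := by
  induction z using TensorProduct.induction_on with
  | zero => simp
  | add a b ha hb => simp only [map_add, ha, hb]
  | tmul p x =>
    show ccAux k L 0 ((p.divX) ⊗ₜ x) = _
    rw [ccAux_tmul, ccAux_tmul, Polynomial.coeff_divX]

lemma X_smul_divX_add (z : Polynomial k ⊗[k] L) :
    (Polynomial.X : Polynomial k) • divXAux k L z + (1 : Polynomial k) ⊗ₜ ccAux k L 0 z = z := by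
  induction z using TensorProduct.induction_on with
  | zero => simp
  | add a b ha hb =>
    rw [map_add, map_add, smul_add, TensorProduct.tmul_add]
    conv_rhs => rw [← ha, ← hb]
    abel
  | tmul p x =>
    rw [ccAux_tmul]
    have h1 : (1 : Polynomial k) ⊗ₜ[k] (p.coeff 0 • x) =
        (Polynomial.C (p.coeff 0)) ⊗ₜ[k] x := by
      rw [TensorProduct.tmul_smul, TensorProduct.smul_tmul']
      congr 1
      rw [← Algebra.algebraMap_eq_smul_one, Polynomial.algebraMap_eq]
    rw [h1]
    show (Polynomial.X : Polynomial k) • ((p.divX) ⊗ₜ[k] x) + _ = _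
    rw [TensorProduct.smul_tmul', smul_eq_mul, ← TensorProduct.add_tmul,
      Polynomial.X_mul_divX_add]

lemma ccAux_X_smul_zero (w : Polynomial k ⊗[k] L) :
    ccAux k L 0 ((Polynomial.X : Polynomial k) • w) = 0 := by
  induction w using TensorProduct.induction_on with
  | zero => simp
  | add a b ha hb => rw [smul_add, map_add, ha, hb, add_zero]
  | tmul p x =>
    rw [TensorProduct.smul_tmul', smul_eq_mul, ccAux_tmul]
    simp [Polynomial.mul_coeff_zero]

lemma ccAux_X_smul_one (w : Polynomial k ⊗[k] L) :
    ccAux k L 1 ((Polynomial.X : Polynomial k) • w) = ccAux k L 0 w := by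
  induction w using TensorProduct.induction_on with
  | zero => simp
  | add a b ha hb => rw [smul_add, map_add, ha, hb, map_add]
  | tmul p x =>
    rw [TensorProduct.smul_tmul', smul_eq_mul, ccAux_tmul, ccAux_tmul]
    rw [show (1 : ℕ) = 0 + 1 from rfl, Polynomial.coeff_X_mul]

end Aux

/-- Let `𝔤` be a Lie algebra over a field `k` with Lie subalgebra `𝔫`, and
let `𝔤[v] := k[v] ⊗_k 𝔤` with its natural Lie algebra structure.  Let `𝔤̃` be the
preimage of `𝔫` under evaluation at `v = 0` (the coefficient map `c 0`).  Then:
(1) `𝔤̃` is a Lie subalgebra of `𝔤[v]`;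
(2) the map `φ : 𝔤̃ → 𝔫 ⋉ (𝔤/𝔫)`, sending `z = vB + X` (with `X ∈ 𝔫[v]`) to
    `(X(0), B(0) mod 𝔫) = (c 0 z, c 1 z mod 𝔫)`, preserves the (semidirect product) Lie
    bracket, where `𝔫` acts on `𝔤/𝔫` by the adjoint action;
(3) `φ` is surjective onto `𝔫 × 𝔤/𝔫`;
(4) the kernel of `φ` is `v · 𝔤̃`. -/
theorem polynomial_loop_algebra_mod_v
    (k : Type*) [Field k] (L : Type*) [LieRing L] [LieAlgebra k L]
    (n : LieSubalgebra k L)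
    (c : ℕ → (Polynomial k ⊗[k] L →ₗ[k] L))
    (hc : ∀ i, c i = (TensorProduct.lid k L).toLinearMap ∘ₗ
      TensorProduct.map (Polynomial.lcoeff k i) LinearMap.id)
    (gt : Submodule k (Polynomial k ⊗[k] L))
    (hgt : gt = Submodule.comap (c 0) n.toSubmodule) :
    (∀ z ∈ gt, ∀ w ∈ gt, ⁅z, w⁆ ∈ gt) ∧
    (∀ z ∈ gt, ∀ w ∈ gt,
      c 0 ⁅z, w⁆ = ⁅c 0 z, c 0 w⁆ ∧
      Submodule.Quotient.mk (p := n.toSubmodule) (c 1 ⁅z, w⁆) =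
        Submodule.Quotient.mk (p := n.toSubmodule) ⁅c 0 z, c 1 w⁆ -
          Submodule.Quotient.mk (p := n.toSubmodule) ⁅c 0 w, c 1 z⁆) ∧
    (∀ X ∈ n, ∀ q : L ⧸ n.toSubmodule, ∃ z ∈ gt,
      c 0 z = X ∧ Submodule.Quotient.mk (p := n.toSubmodule) (c 1 z) = q) ∧
    (∀ z ∈ gt,
      (c 0 z = 0 ∧ Submodule.Quotient.mk (p := n.toSubmodule) (c 1 z) = 0) ↔
      ∃ w ∈ gt, z = (Polynomial.X : Polynomial k) • w) := by
  have hcc : ∀ i, c i = ccAux k L i := hc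
  subst hgt
  rw [hcc 0, hcc 1]
  refine ⟨?_, ?_, ?_, ?_⟩
  · intro z hz w hw
    simp only [Submodule.mem_comap] at *
    rw [ccAux_bracket0]
    exact n.lie_mem hz hw
  · intro z _ w _
    refine ⟨ccAux_bracket0 z w, ?_⟩
    have hsk : ⁅ccAux k L 1 z, ccAux k L 0 w⁆ = -⁅ccAux k L 0 w, ccAux k L 1 z⁆ :=
      (lie_skew _ _).symm
    rw [ccAux_bracket1, hsk, ← sub_eq_add_neg, Submodule.Quotient.mk_sub]
  · intro X hX q
    obtain ⟨Y, hY⟩ := Submodule.Quotient.mk_surjective n.toSubmodule q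
    refine ⟨(1 : Polynomial k) ⊗ₜ X + (Polynomial.X : Polynomial k) ⊗ₜ Y, ?_, ?_, ?_⟩
    · simp only [Submodule.mem_comap, map_add, ccAux_tmul]
      simpa using hX
    · simp [ccAux_tmul]
    · simpa [ccAux_tmul, Polynomial.coeff_one] using hY
  · intro z hz
    constructor
    · rintro ⟨h0, h1⟩
      refine ⟨divXAux k L z, ?_, ?_⟩
      · simp only [Submodule.mem_comap, ccAux_zero_divX]
        exact (Submodule.Quotient.mk_eq_zero _).1 h1
      · have := X_smul_divX_add z
        rw [h0, TensorProduct.tmul_zero, add_zero] at this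
        exact this.symm
    · rintro ⟨w, hw, rfl⟩
      refine ⟨ccAux_X_smul_zero w, ?_⟩
      rw [ccAux_X_smul_one]
      exact (Submodule.Quotient.mk_eq_zero _).2 hw
end

section
/- Let ω be a p-valuation on a group Γ with values in (1/(p−1), ∞). Then for ω(x) = s, ω(y) = t, the bracket [x Fil^{s+} Γ, y Fil^{t+} Γ] := (xyx^{-1}y^{-1}) Fil^{(s+t)+} Γ is well-defined on the associated graded abelian groups gr^s Γ = Fil^s Γ / Fil^{s+} Γ, where Fil^{s+} Γ := {z : ω(z) > s}. That is, if x ≡ x' mod Fil^{s+}Γ and y ≡ y' mod Fil^{t+}Γ then the commutators [x,y] and [x',y'] are congruent modulo Fil^{(s+t)+}Γ. -/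
/-!
Modulo `Fil^{(s+t)+}` one replaces `x` by `x'` and then `y` by `y'`. Each replacement multiplies
the commutator by a conjugate of a commutator `⁅g, a⁆` with `ω g ≥ s` and `ω a > t` (or the
roles of `s` and `t` swapped), whose value exceeds `s + t`; conjugation does not lower `ω`,
and `{z | c < ω z}` is a subgroup.
-/

open scoped ENNReal commutatorElement

section

variable {G : Type*} [Group G] {ω : G → ℝ≥0∞}

theorem map_le_map_inv (hone : ω 1 = ⊤)
    (hdiv : ∀ x y : G, min (ω x) (ω y) ≤ ω (x * y⁻¹))
    (z : G) : ω z ≤ ω z⁻¹ := by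
  simpa [hone] using hdiv 1 z

theorem min_le_map_mul (hone : ω 1 = ⊤)
    (hdiv : ∀ x y : G, min (ω x) (ω y) ≤ ω (x * y⁻¹))
    (a b : G) : min (ω a) (ω b) ≤ ω (a * b) := by
  simpa using (min_le_min le_rfl (map_le_map_inv hone hdiv b)).trans (hdiv a b⁻¹)

theorem lt_map_inv_mul_trans (hone : ω 1 = ⊤)
    (hdiv : ∀ x y : G, min (ω x) (ω y) ≤ ω (x * y⁻¹))
    {c : ℝ≥0∞} {a b d : G} (hab : c < ω (a⁻¹ * b)) (hbd : c < ω (b⁻¹ * d)) :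
    c < ω (a⁻¹ * d) := by
  simpa [mul_assoc] using (lt_min hab hbd).trans_le (min_le_map_mul hone hdiv _ _)

theorem map_le_map_conj (hone : ω 1 = ⊤)
    (hdiv : ∀ x y : G, min (ω x) (ω y) ≤ ω (x * y⁻¹))
    (hcomm : ∀ x y : G, ω x + ω y ≤ ω ⁅x, y⁆) (g z : G) :
    ω z ≤ ω (g * z * g⁻¹) := by
  have h : g * z * g⁻¹ = ⁅g, z⁆ * z := by
    rw [commutatorElement_def]
    group
  rw [h]
  exact (le_min (le_add_self.trans (hcomm g z)) le_rfl).trans (min_le_map_mul hone hdiv _ _)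

theorem add_lt_map_commutatorElement (hcomm : ∀ x y : G, ω x + ω y ≤ ω ⁅x, y⁆)
    {s t : ℝ≥0∞} {g a : G} (hs : s ≠ ⊤) (hg : s ≤ ω g) (ha : t < ω a) :
    s + t < ω ⁅g, a⁆ :=
  (ENNReal.add_lt_add_of_le_of_lt hs hg ha).trans_le (hcomm g a)

theorem add_lt_map_commutatorElement_inv_mul_left (hone : ω 1 = ⊤)
    (hdiv : ∀ x y : G, min (ω x) (ω y) ≤ ω (x * y⁻¹))
    (hcomm : ∀ x y : G, ω x + ω y ≤ ω ⁅x, y⁆) {s t : ℝ≥0∞} {x x' y : G}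
    (ht : t ≠ ⊤) (hy : t ≤ ω y) (hxx' : s < ω (x⁻¹ * x')) :
    s + t < ω (⁅x, y⁆⁻¹ * ⁅x', y⁆) := by
  have h : ⁅x, y⁆⁻¹ * ⁅x', y⁆ = (y * x) * ⁅y⁻¹, x⁻¹ * x'⁆ * (y * x)⁻¹ := by
    simp only [commutatorElement_def]
    group
  rw [h, add_comm]
  have hy_inv : t ≤ ω y⁻¹ := hy.trans (map_le_map_inv hone hdiv y)
  exact (add_lt_map_commutatorElement hcomm ht hy_inv hxx').trans_le
    (map_le_map_conj hone hdiv hcomm _ _)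

theorem add_lt_map_commutatorElement_inv_mul_right (hone : ω 1 = ⊤)
    (hdiv : ∀ x y : G, min (ω x) (ω y) ≤ ω (x * y⁻¹))
    (hcomm : ∀ x y : G, ω x + ω y ≤ ω ⁅x, y⁆) {s t : ℝ≥0∞} {x y y' : G}
    (hs : s ≠ ⊤) (hx : s ≤ ω x) (hyy' : t < ω (y⁻¹ * y')) :
    s + t < ω (⁅x, y⁆⁻¹ * ⁅x, y'⁆) := by
  have h : ⁅x, y⁆⁻¹ * ⁅x, y'⁆ = y * ⁅x, y⁻¹ * y'⁆ * y⁻¹ := by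
    simp only [commutatorElement_def]
    group
  rw [h]
  exact (add_lt_map_commutatorElement hcomm hs hx hyy').trans_le
    (map_le_map_conj hone hdiv hcomm _ _)

end

theorem graded_bracket_well_defined_general
    (Γ : Type*) [Group Γ] (ω : Γ → ℝ≥0∞)
    (hone : ω 1 = ⊤)
    (hdiv : ∀ x y : Γ, min (ω x) (ω y) ≤ ω (x * y⁻¹))
    (hcomm : ∀ x y : Γ, ω x + ω y ≤ ω (x * y * x⁻¹ * y⁻¹))
    (s t : ℝ≥0∞)
    (x x' y y' : Γ)
    (hx : ω x = s) (hy : ω y = t)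
    (hxx' : s < ω (x⁻¹ * x')) (hyy' : t < ω (y⁻¹ * y')) :
    s + t < ω ((x * y * x⁻¹ * y⁻¹)⁻¹ * (x' * y' * x'⁻¹ * y'⁻¹)) := by
  have hx' : s ≤ ω x' := by
    simpa using (le_min hx.ge hxx'.le).trans (min_le_map_mul hone hdiv x (x⁻¹ * x'))
  exact lt_map_inv_mul_trans hone hdiv
    (add_lt_map_commutatorElement_inv_mul_left hone hdiv hcomm (ne_top_of_lt hyy') hy.ge hxx')
    (add_lt_map_commutatorElement_inv_mul_right hone hdiv hcomm (ne_top_of_lt hxx') hx' hyy')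

/-- For a `p`-valuation `ω` on a group `Γ`, the graded Lie bracket on
`gr Γ` is well defined: if `ω x = s`, `ω y = t`, and `x ≡ x'` modulo `Fil^{s+} Γ`
(i.e. `ω (x⁻¹ x') > s`) and `y ≡ y'` modulo `Fil^{t+} Γ`, then the commutators
`[x,y] = xyx⁻¹y⁻¹` and `[x',y']` are congruent modulo `Fil^{(s+t)+} Γ`. -/
theorem graded_bracket_well_defined
    (p : ℕ) (hp : p.Prime) (Γ : Type*) [Group Γ] (ω : Γ → ℝ≥0∞)
    (hone : ω 1 = ⊤)
    (hfin : ∀ x : Γ, x ≠ 1 → ω x ≠ ⊤)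
    (hlow : ∀ x : Γ, x ≠ 1 → ((p : ℝ≥0∞) - 1)⁻¹ < ω x)
    (hdiv : ∀ x y : Γ, min (ω x) (ω y) ≤ ω (x * y⁻¹))
    (hcomm : ∀ x y : Γ, ω x + ω y ≤ ω (x * y * x⁻¹ * y⁻¹))
    (hpow : ∀ x : Γ, ω (x ^ p) = ω x + 1)
    (s t : ℝ≥0∞) (hs : s ≠ ⊤) (ht : t ≠ ⊤)
    (x x' y y' : Γ)
    (hx : ω x = s) (hy : ω y = t)
    (hxx' : s < ω (x⁻¹ * x')) (hyy' : t < ω (y⁻¹ * y')) :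
    s + t < ω ((x * y * x⁻¹ * y⁻¹)⁻¹ * (x' * y' * x'⁻¹ * y'⁻¹)) :=
  graded_bracket_well_defined_general Γ ω hone hdiv hcomm s t x x' y y' hx hy hxx' hyy'
end
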